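/- arXiv:2505.06824 — 4 statements merged into one kernel-verified Lean document; each statement's English description precedes it below -/
import Mathlib

section
/- (Validity of the composition axiom A3.) For every causal deontic model M_D, every tuple X⃗ of distinct endogenous variables with values x⃗, every endogenous variable Y not in X⃗ with value y, and every endogenous variable Z not in X⃗ and distinct from Y with value z: if M_D ⊨ [X⃗=x⃗]Y=y and M_D ⊨ [X⃗=x⃗]Z=z, then M_D ⊨ [X⃗=x⃗,Y=y]Z=z. -/
/-- A signature `(U, V, R)`: finite set of exogenous variables `U`, finite set of
endogenous variables `V` (disjoint from `U`, modelled by a sum type), and for each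
variable a finite nonempty range of values. -/
structure Signature where
  U : Type
  V : Type
  R : U ⊕ V → Type
  fintypeU : Fintype U
  fintypeV : Fintype V
  decEqU : DecidableEq U
  decEqV : DecidableEq V
  fintypeR : ∀ X, Fintype (R X)
  nonemptyR : ∀ X, Nonempty (R X)
  decEqR : ∀ X, DecidableEq (R X)

attribute [instance] Signature.fintypeU Signature.fintypeV Signature.decEqU
  Signature.decEqV Signature.fintypeR Signature.nonemptyR Signature.decEqR

/-- An assignment of values to all the variables. -/
abbrev Assignment (S : Signature) : Type := ∀ X : S.U ⊕ S.V, S.R X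

/-- An exogenous setting: an assignment of values to all exogenous variables. -/
abbrev ExoSetting (S : Signature) : Type := ∀ X : S.U, S.R (Sum.inl X)

/-- An assignment of values to all variables except `X` (i.e. `A^{-X}`). -/
abbrev CoAssignment (S : Signature) (X : S.U ⊕ S.V) : Type :=
  ∀ Y : S.U ⊕ S.V, Y ≠ X → S.R Y

/-- The restriction `A^{-X}` of an assignment. -/
def Assignment.minus {S : Signature} (A : Assignment S) (X : S.U ⊕ S.V) :
    CoAssignment S X := fun Y _ => A Y

/-- A set of structural functions: for each endogenous variable `X`, a function
giving the value of `X` from the values of all the other variables. -/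
abbrev StructFns (S : Signature) : Type :=
  ∀ X : S.V, CoAssignment S (Sum.inr X) → S.R (Sum.inr X)

/-- `A` complies with `F` iff `A(X) = f_X(A^{-X})` for every endogenous `X`. -/
def Complies (S : Signature) (F : StructFns S) (A : Assignment S) : Prop :=
  ∀ X : S.V, A (Sum.inr X) = F X (A.minus (Sum.inr X))

/-- `F` is recursive (acyclic): there is a strict total order on the variables such
that each `f_X` does not depend on the values of variables strictly above `X`. -/
def Recursive (S : Signature) (F : StructFns S) : Prop :=
  ∃ lt : (S.U ⊕ S.V) → (S.U ⊕ S.V) → Prop,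
    IsStrictTotalOrder (S.U ⊕ S.V) lt ∧
    ∀ X : S.V, ∀ B B' : CoAssignment S (Sum.inr X),
      (∀ Y (hne : Y ≠ Sum.inr X), lt Y (Sum.inr X) → B Y hne = B' Y hne) →
      F X B = F X B'

/-- An intervention tuple `X⃗ = x⃗`: a list of endogenous variables with values. -/
abbrev Ivn (S : Signature) : Type := List ((X : S.V) × S.R (Sum.inr X))

/-- The variables of an intervention tuple. -/
def Ivn.fsts {S : Signature} (l : Ivn S) : List S.V := l.map Sigma.fst

/-- The variables in the tuple are pairwise distinct. -/
def Ivn.Distinct {S : Signature} (l : Ivn S) : Prop := (l.map Sigma.fst).Nodup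

/-- The intervened structural functions `F_{X⃗ = x⃗}`: each `f_{X_i}` is replaced by
the constant function returning `x_i`; the other functions are unchanged. -/
noncomputable def applyIvn (S : Signature) (F : StructFns S) (l : Ivn S) : StructFns S :=
  fun X B =>
    if h : ∃ x : S.R (Sum.inr X), (⟨X, x⟩ : (Y : S.V) × S.R (Sum.inr Y)) ∈ l then h.choose
    else F X B

/-- Formulas of the language `L_D`:
atoms `X = x`, negation, conjunction, intervention formulas `[X⃗=x⃗]φ`,
priority formulas `X=x ≺ Y=y`, and context formulas `φ^u`. -/
inductive Formula (S : Signature) : Type where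
  | atom (X : S.U ⊕ S.V) (x : S.R X) : Formula S
  | neg (φ : Formula S) : Formula S
  | and (φ ψ : Formula S) : Formula S
  | intervene (l : Ivn S) (φ : Formula S) : Formula S
  | prec (X : S.U ⊕ S.V) (x : S.R X) (Y : S.U ⊕ S.V) (y : S.R Y) : Formula S
  | ctx (u : ExoSetting S) (φ : Formula S) : Formula S

def Formula.imp {S : Signature} (φ ψ : Formula S) : Formula S := .neg (.and φ (.neg ψ))

def Formula.or {S : Signature} (φ ψ : Formula S) : Formula S := .neg (.and (.neg φ) (.neg ψ))

def Formula.iffF {S : Signature} (φ ψ : Formula S) : Formula S := .and (φ.imp ψ) (ψ.imp φ)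

/-- Atoms `X = x`. -/
abbrev SAtom (S : Signature) : Type := (X : S.U ⊕ S.V) × S.R X

/-- A priority structure `P = (Φ, ≪)`: a set of atoms together with a
priority relation among atoms. -/
structure Priority (S : Signature) where
  dom : Set (SAtom S)
  lt : SAtom S → SAtom S → Prop

/-- The priority relation is a strict partial order (asymmetric and transitive). -/
def Priority.Strict {S : Signature} (P : Priority S) : Prop :=
  (∀ a b, P.lt a b → ¬ P.lt b a) ∧ (∀ a b c, P.lt a b → P.lt b c → P.lt a c)

open Classical in
/-- The unique assignment complying with `F` whose values on the exogenous
variables are given by `u` (when `F` is recursive it exists and is unique). -/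
noncomputable def solve (S : Signature) (F : StructFns S) (u : ExoSetting S) : Assignment S :=
  if h : ∃ A : Assignment S, Complies S F A ∧ ∀ X : S.U, A (Sum.inl X) = u X then h.choose
  else fun X => Classical.arbitrary (S.R X)

/-- Truth of a formula at structural functions `F`, priority `P` and actual
assignment `A`. -/
def Sat (S : Signature) : StructFns S → Priority S → Assignment S → Formula S → Prop
  | _, _, A, .atom X x => A X = x
  | F, P, A, .neg φ => ¬ Sat S F P A φ
  | F, P, A, .and φ ψ => Sat S F P A φ ∧ Sat S F P A ψ
  | F, P, A, .intervene l φ =>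
      Sat S (applyIvn S F l) P (solve S (applyIvn S F l) (fun X => A (Sum.inl X))) φ
  | _, P, _, .prec X x Y y => P.lt ⟨X, x⟩ ⟨Y, y⟩
  | F, P, _, .ctx u φ => Sat S F P (solve S F u) φ

/-- A causal deontic model: recursive structural functions, a priority
structure which is a strict partial order, and an actual assignment complying
with the structural functions. -/
structure CDModel (S : Signature) where
  F : StructFns S
  P : Priority S
  A : Assignment S
  recF : Recursive S F
  strictP : P.Strict
  compliesA : Complies S F A

/-- Truth in a causal deontic model. -/
def CDModel.Sat {S : Signature} (M : CDModel S) (φ : Formula S) : Prop :=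
  _root_.Sat S M.F M.P M.A φ

/-!
Under the intervention `X⃗ = x⃗` the solution `A'` gives `Y` the value `y`, so `A'` also
complies with the equations in which `f_Y` is further replaced by the constant `y`. Recursive
equations have exactly one solution per exogenous setting (build it by well-founded recursion
along the order of the variables; two solutions agree by well-founded induction), hence `A'` is
the solution of `F_{X⃗=x⃗, Y=y}` as well, and it gives `Z` the value `z`.
-/

variable {S : Signature}

namespace Recursive

variable {F : StructFns S}

theorem exists_wellFounded (hF : Recursive S F) :
    ∃ lt : (S.U ⊕ S.V) → (S.U ⊕ S.V) → Prop, WellFounded lt ∧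
      ∀ X : S.V, ∀ B B' : CoAssignment S (Sum.inr X),
        (∀ Y (hne : Y ≠ Sum.inr X), lt Y (Sum.inr X) → B Y hne = B' Y hne) →
        F X B = F X B' := by
  obtain ⟨lt, hto, hdep⟩ := hF
  have := hto
  exact ⟨lt, Finite.wellFounded_of_trans_of_irrefl lt, hdep⟩

theorem exists_complies (hF : Recursive S F) (u : ExoSetting S) :
    ∃ A : Assignment S, Complies S F A ∧ ∀ X : S.U, A (Sum.inl X) = u X := by
  classical
  obtain ⟨lt, hwf, hdep⟩ := hF.exists_wellFounded
  -- `f_v` ignores the variables above `v`, so the filler value there is never read.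
  let step : ∀ X : S.U ⊕ S.V, (∀ Y, lt Y X → S.R Y) → S.R X
    | Sum.inl a => fun _ => u a
    | Sum.inr v => fun below =>
        F v fun Y _ => if h : lt Y (Sum.inr v) then below Y h else Classical.arbitrary _
  have hfix : ∀ X, hwf.fix step X = step X fun Y _ => hwf.fix step Y := hwf.fix_eq step
  refine ⟨hwf.fix step, fun v => ?_, fun a => hfix (Sum.inl a)⟩
  rw [hfix (Sum.inr v)]
  exact hdep v _ _ fun Y _ hlt => by simp [hlt, Assignment.minus]

theorem eq_of_complies (hF : Recursive S F) {A A' : Assignment S}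
    (hA : Complies S F A) (hA' : Complies S F A')
    (hexo : ∀ X : S.U, A (Sum.inl X) = A' (Sum.inl X)) : A = A' := by
  obtain ⟨lt, hwf, hdep⟩ := hF.exists_wellFounded
  funext X
  induction X using hwf.induction with
  | _ X ih =>
    cases X with
    | inl a => exact hexo a
    | inr v =>
      rw [hA v, hA' v]
      exact hdep v _ _ fun W _ hlt => ih W hlt

theorem solve_spec (hF : Recursive S F) (u : ExoSetting S) :
    Complies S F (solve S F u) ∧ ∀ X : S.U, solve S F u (Sum.inl X) = u X := by
  have h := hF.exists_complies u
  rw [solve, dif_pos h]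
  exact h.choose_spec

theorem solve_eq (hF : Recursive S F) {u : ExoSetting S} {A : Assignment S}
    (hA : Complies S F A) (hexo : ∀ X : S.U, A (Sum.inl X) = u X) : solve S F u = A :=
  let ⟨hc, he⟩ := hF.solve_spec u
  hF.eq_of_complies hc hA fun X => (he X).trans (hexo X).symm

theorem applyIvn (hF : Recursive S F) (l : Ivn S) : Recursive S (applyIvn S F l) := by
  obtain ⟨lt, hto, hdep⟩ := hF
  refine ⟨lt, hto, fun X B B' hBB => ?_⟩
  unfold _root_.applyIvn
  split
  · rfl
  · exact hdep X B B' hBB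

end Recursive

theorem Ivn.Distinct.append_singleton {l : Ivn S} (hl : l.Distinct) {Y : S.V}
    (hY : Y ∉ l.fsts) (y : S.R (Sum.inr Y)) : Ivn.Distinct (l ++ [⟨Y, y⟩]) := by
  rw [Ivn.Distinct, List.map_append, List.map_singleton, List.nodup_append]
  refine ⟨hl, List.nodup_singleton _, ?_⟩
  rintro _ hX _ hY' rfl
  obtain rfl := List.mem_singleton.mp hY'
  exact hY hX

theorem applyIvn_of_mem (F : StructFns S) {l : Ivn S} (hl : l.Distinct)
    {X : S.V} {x : S.R (Sum.inr X)} (hx : ⟨X, x⟩ ∈ l) (B : CoAssignment S (Sum.inr X)) :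
    applyIvn S F l X B = x := by
  have h : ∃ x', ⟨X, x'⟩ ∈ l := ⟨x, hx⟩
  rw [applyIvn, dif_pos h]
  exact eq_of_heq (Sigma.mk.inj_iff.mp (List.inj_on_of_nodup_map hl h.choose_spec hx rfl)).2

theorem applyIvn_of_not_mem (F : StructFns S) {l : Ivn S} {X : S.V}
    (hX : X ∉ l.fsts) (B : CoAssignment S (Sum.inr X)) :
    applyIvn S F l X B = F X B :=
  dif_neg fun ⟨_, hx⟩ => hX (List.mem_map_of_mem hx)

theorem Complies.applyIvn_append_singleton {F : StructFns S} {l : Ivn S} (hl : l.Distinct)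
    {Y : S.V} (hY : Y ∉ l.fsts) {y : S.R (Sum.inr Y)} {A : Assignment S}
    (hA : Complies S (applyIvn S F l) A) (hAY : A (Sum.inr Y) = y) :
    Complies S (applyIvn S F (l ++ [⟨Y, y⟩])) A := by
  have hl' := hl.append_singleton hY y
  intro X
  by_cases hXl : X ∈ l.fsts
  · obtain ⟨⟨_, x⟩, hx, rfl⟩ := List.mem_map.mp hXl
    rw [applyIvn_of_mem F hl' (List.mem_append_left _ hx), hA, applyIvn_of_mem F hl hx]
  by_cases hXY : X = Y
  · subst hXY
    rwa [applyIvn_of_mem F hl' (List.mem_append_right _ (List.mem_singleton_self _))]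
  have hXl' : X ∉ Ivn.fsts (l ++ [⟨Y, y⟩]) := by
    simpa [Ivn.fsts, hXY] using hXl
  rw [applyIvn_of_not_mem F hXl', hA, applyIvn_of_not_mem F hXl]

theorem A3_valid_general (S : Signature) (M : CDModel S)
    (l : Ivn S) (hl : Ivn.Distinct l)
    (Y : S.V) (hY : Y ∉ Ivn.fsts l) (y : S.R (Sum.inr Y))
    (Z : S.V) (z : S.R (Sum.inr Z))
    (h1 : M.Sat (.intervene l (.atom (Sum.inr Y) y)))
    (h2 : M.Sat (.intervene l (.atom (Sum.inr Z) z))) :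
    M.Sat (.intervene (l ++ [⟨Y, y⟩]) (.atom (Sum.inr Z) z)) := by
  obtain ⟨hcomplies, hexo⟩ := (M.recF.applyIvn l).solve_spec fun X => M.A (Sum.inl X)
  have hsolve := (M.recF.applyIvn (l ++ [⟨Y, y⟩])).solve_eq
    (hcomplies.applyIvn_append_singleton hl hY h1) hexo
  show solve S _ _ (Sum.inr Z) = z
  rw [hsolve]
  exact h2

/-- validity of the composition axiom A3: For every causal deontic
model `M_D`, every tuple `X⃗` of distinct endogenous variables with values `x⃗`,
every endogenous variable `Y` not in `X⃗` with value `y`, and every endogenous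
variable `Z` not in `X⃗` and distinct from `Y` with value `z`: if
`M_D ⊨ [X⃗=x⃗]Y=y` and `M_D ⊨ [X⃗=x⃗]Z=z`, then `M_D ⊨ [X⃗=x⃗,Y=y]Z=z`. -/
theorem A3_valid (S : Signature) (M : CDModel S)
    (l : Ivn S) (hl : Ivn.Distinct l)
    (Y : S.V) (hY : Y ∉ Ivn.fsts l) (y : S.R (Sum.inr Y))
    (Z : S.V) (hZ : Z ∉ Ivn.fsts l) (hZY : Z ≠ Y) (z : S.R (Sum.inr Z))
    (h1 : M.Sat (.intervene l (.atom (Sum.inr Y) y)))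
    (h2 : M.Sat (.intervene l (.atom (Sum.inr Z) z))) :
    M.Sat (.intervene (l ++ [⟨Y, y⟩]) (.atom (Sum.inr Z) z)) :=
  A3_valid_general S M l hl Y hY y Z z h1 h2
end

section
/- (Validity of the recursiveness axiom A5.) For every causal deontic model M_D and all pairwise distinct endogenous variables X_0,…,X_k, it is not the case that M_D ⊨ X_0⇝X_1, …, M_D ⊨ X_{k-1}⇝X_k, and M_D ⊨ X_k⇝X_0 all hold, where Y⇝Z abbreviates the disjunction, over all tuples X⃗ of distinct endogenous variables excluding Y and Z with values x⃗ and all values y≠y' of Y and z≠z' of Z, of ([X⃗=x⃗,Y=y]Z=z' ∧ [X⃗=x⃗,Y=y']Z=z). -/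
/-- `Y ⇝ Z`: `Y` has causal influence on `Z` in the model `M`.  This is the
semantic content of the abbreviation
`⋁ ([X⃗=x⃗,Y=y]Z=z' ∧ [X⃗=x⃗,Y=y']Z=z)`, the disjunction being over all tuples
`X⃗ = x⃗` of distinct endogenous variables excluding `Y` and `Z`, and all values
`y ≠ y'` of `Y` and `z ≠ z'` of `Z`. -/
def Influences {S : Signature} (M : CDModel S) (Y Z : S.V) : Prop :=
  Y ≠ Z ∧
  ∃ (l : Ivn S) (y y' : S.R (Sum.inr Y)) (z z' : S.R (Sum.inr Z)),
    Ivn.Distinct (l ++ [⟨Y, y⟩]) ∧ Z ∉ Ivn.fsts l ∧ y ≠ y' ∧ z ≠ z' ∧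
    M.Sat (.intervene (l ++ [⟨Y, y⟩]) (.atom (Sum.inr Z) z')) ∧
    M.Sat (.intervene (l ++ [⟨Y, y'⟩]) (.atom (Sum.inr Z) z))

/-!
Let `<` be a strict total order witnessing that the structural functions are recursive. If
`Y ⇝ Z`, then `Y < Z`: otherwise `Z < Y`, and the two interventions in the witness of `Y ⇝ Z`,
which differ only at `Y`, have the same equations below `Y`; by well-founded induction their
solutions agree below `Y`, in particular at `Z`, contradicting `z ≠ z'`. A causal cycle
`X₀ ⇝ ⋯ ⇝ Xₖ ⇝ X₀` would therefore give `X₀ < X₀`.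
-/

variable {S : Signature}

def DependsOnlyBelow (F : StructFns S) (lt : S.U ⊕ S.V → S.U ⊕ S.V → Prop) : Prop :=
  ∀ X : S.V, ∀ B B' : CoAssignment S (Sum.inr X),
    (∀ Y (hne : Y ≠ Sum.inr X), lt Y (Sum.inr X) → B Y hne = B' Y hne) →
    F X B = F X B'

section DependsOnlyBelow

variable {F : StructFns S} {lt : S.U ⊕ S.V → S.U ⊕ S.V → Prop}

open Classical in
theorem DependsOnlyBelow.exists_complies (wf : WellFounded lt) (hF : DependsOnlyBelow F lt)
    (u : ExoSetting S) : ∃ A : Assignment S, Complies S F A ∧ ∀ x : S.U, A (Sum.inl x) = u x := by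
  let A : Assignment S := wf.fix fun W rec =>
    match W, rec with
    | .inl x, _ => u x
    | .inr X, rec => F X fun V _ => if h : lt V (.inr X) then rec V h else Classical.arbitrary _
  refine ⟨A, fun X => ?_, fun x => wf.fix_eq _ _⟩
  rw [show A (.inr X) = _ from wf.fix_eq _ _]
  exact hF X _ _ fun V _ hV => dif_pos hV

theorem DependsOnlyBelow.solve_spec (wf : WellFounded lt) (hF : DependsOnlyBelow F lt)
    (u : ExoSetting S) :
    Complies S F (solve S F u) ∧ ∀ x : S.U, solve S F u (Sum.inl x) = u x := by
  have hex := hF.exists_complies wf u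
  rw [solve, dif_pos hex]
  exact hex.choose_spec

theorem DependsOnlyBelow.applyIvn (hF : DependsOnlyBelow F lt) (l : Ivn S) :
    DependsOnlyBelow (applyIvn S F l) lt := by
  intro X B B' hBB
  unfold _root_.applyIvn
  split_ifs
  · rfl
  · exact hF X B B' hBB

theorem Complies.eq_of_lt [IsTrans _ lt] (wf : WellFounded lt) {F₁ F₂ : StructFns S}
    (hF₂ : DependsOnlyBelow F₂ lt) {A₁ A₂ : Assignment S} (h₁ : Complies S F₁ A₁)
    (h₂ : Complies S F₂ A₂) (hexo : ∀ x : S.U, A₁ (Sum.inl x) = A₂ (Sum.inl x))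
    {T : S.U ⊕ S.V} (hF : ∀ W : S.V, lt (Sum.inr W) T → F₁ W = F₂ W) :
    ∀ W, lt W T → A₁ W = A₂ W := by
  intro W
  induction W using wf.induction with
  | _ W ih =>
    intro hWT
    cases W with
    | inl x => exact hexo x
    | inr X =>
      rw [h₁ X, h₂ X, hF X hWT]
      exact hF₂ X _ _ fun V _ hV => ih V hV (_root_.trans hV hWT)

end DependsOnlyBelow

theorem applyIvn_append_singleton_of_ne (F : StructFns S) (l : Ivn S) {Y W : S.V}
    (y : S.R (Sum.inr Y)) (hWY : W ≠ Y) :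
    applyIvn S F (l ++ [⟨Y, y⟩]) W = applyIvn S F l W := by
  have hmem : ∀ x, (⟨W, x⟩ : (V : S.V) × S.R (Sum.inr V)) ∈ l ++ [⟨Y, y⟩] ↔ ⟨W, x⟩ ∈ l := by
    simp [hWY]
  funext B
  simp only [applyIvn, hmem]

theorem Influences.lt {M : CDModel S} {lt : S.U ⊕ S.V → S.U ⊕ S.V → Prop}
    [IsStrictTotalOrder _ lt] (wf : WellFounded lt) (hF : DependsOnlyBelow M.F lt) {Y Z : S.V}
    (h : Influences M Y Z) : lt (Sum.inr Y) (Sum.inr Z) := by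
  obtain ⟨hYZ, l, y, y', z, z', -, -, -, hzz', h₁, h₂⟩ := h
  let u : ExoSetting S := fun x => M.A (Sum.inl x)
  obtain ⟨hc₁, hu₁⟩ := (hF.applyIvn (l ++ [⟨Y, y⟩])).solve_spec wf u
  obtain ⟨hc₂, hu₂⟩ := (hF.applyIvn (l ++ [⟨Y, y'⟩])).solve_spec wf u
  by_contra hnlt
  have hZY : lt (Sum.inr Z) (Sum.inr Y) :=
    ((trichotomous_of lt _ _).resolve_left hnlt).resolve_left (by simpa using hYZ)
  have hsame_below : ∀ W : S.V, lt (Sum.inr W) (Sum.inr Y) →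
      applyIvn S M.F (l ++ [⟨Y, y⟩]) W = applyIvn S M.F (l ++ [⟨Y, y'⟩]) W := fun W hW => by
    have hWY : W ≠ Y := fun h => irrefl _ (h ▸ hW)
    rw [applyIvn_append_singleton_of_ne _ _ _ hWY, applyIvn_append_singleton_of_ne _ _ _ hWY]
  have hZ := hc₁.eq_of_lt wf (hF.applyIvn _) hc₂ (fun x => (hu₁ x).trans (hu₂ x).symm)
    hsame_below _ hZY
  exact hzz' (h₂.symm.trans (hZ.symm.trans h₁))

theorem not_rel_last_zero_of_rel_succ {α : Type*} {r : α → α → Prop} [IsStrictOrder α r] {k : ℕ}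
    (f : Fin (k + 1) → α) (h : ∀ i : Fin k, r (f i.castSucc) (f i.succ)) :
    ¬ r (f (Fin.last k)) (f 0) := by
  have hpath : ∀ i, Relation.ReflTransGen r (f 0) (f i) :=
    Fin.induction .refl fun i ih => ih.tail (h i)
  intro hlast
  have hloop : r (f 0) (f 0) := Relation.transGen_eq_self (r := r) ▸ .tail' (hpath _) hlast
  exact irrefl _ hloop

theorem A5_valid_general (S : Signature) (M : CDModel S) (k : ℕ)
    (X : Fin (k + 1) → S.V) :
    ¬ ((∀ i : Fin k, Influences M (X i.castSucc) (X i.succ)) ∧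
        Influences M (X (Fin.last k)) (X 0)) := by
  rintro ⟨hchain, hlast⟩
  obtain ⟨lt, hlt, hF⟩ := M.recF
  have wf : WellFounded lt := Finite.wellFounded_of_trans_of_irrefl lt
  exact not_rel_last_zero_of_rel_succ (Sum.inr ∘ X) (fun i => (hchain i).lt wf hF)
    (hlast.lt wf hF)

/-- validity of the recursiveness axiom A5: for every causal deontic
model `M_D` and all pairwise distinct endogenous variables `X_0, …, X_k`, it is not
the case that `X_0 ⇝ X_1`, …, `X_{k-1} ⇝ X_k` and `X_k ⇝ X_0` all hold in `M_D`. -/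
theorem A5_valid (S : Signature) (M : CDModel S) (k : ℕ)
    (X : Fin (k + 1) → S.V) (hinj : Function.Injective X) :
    ¬ ((∀ i : Fin k, Influences M (X i.castSucc) (X i.succ)) ∧
        Influences M (X (Fin.last k)) (X 0)) :=
  A5_valid_general S M k X
end

section
/- (Validity of the axiom G_[].) For every causal deontic model M_D, every tuple X⃗ of distinct endogenous variables with values x⃗, every exogenous setting u, and every formula φ: M_D ⊨ ([X⃗=x⃗]φ)^u if and only if M_D ⊨ [X⃗=x⃗](φ^u). -/
theorem exists_solution (S : Signature) (F : StructFns S) (h : Recursive S F)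
    (u : ExoSetting S) :
    ∃ A : Assignment S, Complies S F A ∧ ∀ X : S.U, A (Sum.inl X) = u X := by
  classical
  obtain ⟨lt, hsto, hdep⟩ := h
  haveI := hsto
  have wf : WellFounded lt := Finite.wellFounded_of_trans_of_irrefl lt
  let body : ∀ X : S.U ⊕ S.V, (∀ Y, lt Y X → S.R Y) → S.R X :=
    fun X => match X with
      | Sum.inl x => fun _ => u x
      | Sum.inr v => fun rec => F v (fun Y _ =>
          if h : lt Y (Sum.inr v) then rec Y h else Classical.arbitrary _)
  let A : Assignment S := WellFounded.fix wf body
  have hAeq : ∀ X, A X = body X (fun Y _ => A Y) := fun X =>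
    WellFounded.fix_eq wf body X
  refine ⟨A, ?_, ?_⟩
  · intro v
    have hb : body (Sum.inr v) (fun Y _ => A Y) = F v (fun Y _ =>
        if h : lt Y (Sum.inr v) then A Y else Classical.arbitrary _) := rfl
    rw [hAeq (Sum.inr v), hb]
    apply hdep
    intro Y hne hY
    rw [dif_pos hY]
    rfl
  · intro X
    rw [hAeq (Sum.inl X)]

theorem solve_exo (S : Signature) (F : StructFns S) (h : Recursive S F)
    (u : ExoSetting S) (X : S.U) : solve S F u (Sum.inl X) = u X := by
  have hex := exists_solution S F h u
  rw [solve, dif_pos hex]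
  exact hex.choose_spec.2 X

/-- validity of the axiom `G_[]`: for every causal deontic model
`M_D`, every tuple `X⃗` of distinct endogenous variables with values `x⃗`, every
exogenous setting `u`, and every formula `φ`:
`M_D ⊨ ([X⃗=x⃗]φ)^u` iff `M_D ⊨ [X⃗=x⃗](φ^u)`. -/
theorem G_intervention_valid (S : Signature) (M : CDModel S)
    (l : Ivn S) (hl : Ivn.Distinct l) (u : ExoSetting S) (φ : Formula S) :
    M.Sat (.ctx u (.intervene l φ)) ↔ M.Sat (.intervene l (.ctx u φ)) := by
  have hexo : (fun X => solve S M.F u (Sum.inl X)) = u := by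
    funext X; exact solve_exo S M.F M.recF u X
  simp only [CDModel.Sat, Sat, hexo]
end

section
/- (Definability of the ideal ordering, formula (1).) Fix a signature S and let Φ be the set of all atoms X=x for X ∈ U∪V. For every causal deontic model M_D=(S,F,P,A) whose priority ordering P has domain Φ, and all exogenous settings u, u', the following are equivalent: (a) M_D satisfies the formula ⋀_{X=x∈Φ}((X=x)^u → (X=x)^{u'}) ∨ ⋁_{Y=y∈Φ}( ((Y=y)^{u'} ∧ ¬(Y=y)^u) ∧ ⋀_{Z=z∈Φ}(((Z=z)^u ∧ ¬(Z=z)^{u'}) → Z=z ≺ Y=y) ); (b) A_u ≤_P A_{u'}, where A_u and A_{u'} are the unique assignments complying with F whose exogenous values are u and u' respectively, and ≤_P is the ideal ordering induced by P. -/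
/-- A falsum, available whenever the signature has at least one variable. -/
noncomputable def botF (S : Signature) (h : Nonempty (S.U ⊕ S.V)) : Formula S :=
  Formula.and (.atom (@Classical.arbitrary _ h) (Classical.arbitrary _))
    (.neg (.atom (@Classical.arbitrary _ h) (Classical.arbitrary _)))

/-- A verum. -/
noncomputable def topF (S : Signature) (h : Nonempty (S.U ⊕ S.V)) : Formula S :=
  .neg (botF S h)

/-- Finite conjunction. -/
noncomputable def bigAnd (S : Signature) (h : Nonempty (S.U ⊕ S.V))
    (L : List (Formula S)) : Formula S :=
  L.foldr Formula.and (topF S h)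

/-- Finite disjunction. -/
noncomputable def bigOr (S : Signature) (h : Nonempty (S.U ⊕ S.V))
    (L : List (Formula S)) : Formula S :=
  L.foldr Formula.or (botF S h)

/-- The ideal ordering `≤_P` induced by a priority structure with domain `dom` and
priority relation `lt`: `A ≤_P A'` iff either every atom of the domain satisfied by
`A` is satisfied by `A'`, or there is an atom `Y=y` in the domain with `A(Y) ≠ y`,
`A'(Y) = y` such that every atom `Z=z` of the domain with `A(Z) = z` and
`A'(Z) ≠ z` has strictly lower priority than `Y=y`. -/
def IdealLe (S : Signature) (dom : Set (SAtom S)) (lt : SAtom S → SAtom S → Prop)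
    (A A' : Assignment S) : Prop :=
  (∀ a ∈ dom, A a.1 = a.2 → A' a.1 = a.2) ∨
  ∃ b ∈ dom, A b.1 ≠ b.2 ∧ A' b.1 = b.2 ∧
    ∀ c ∈ dom, A c.1 = c.2 → A' c.1 ≠ c.2 → lt c b

/-- The list of all atoms of the signature. -/
noncomputable def allAtoms (S : Signature) : List (SAtom S) :=
  (Finset.univ : Finset (SAtom S)).toList

/-- Formula (1), defining `U⃗=u ≤ U⃗=u'`. -/
noncomputable def formula1 (S : Signature) (h : Nonempty (S.U ⊕ S.V))
    (u u' : ExoSetting S) : Formula S :=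
  Formula.or
    (bigAnd S h ((allAtoms S).map fun a =>
      (Formula.ctx u (.atom a.1 a.2)).imp (Formula.ctx u' (.atom a.1 a.2))))
    (bigOr S h ((allAtoms S).map fun b =>
      Formula.and
        (Formula.and (Formula.ctx u' (.atom b.1 b.2))
          (.neg (Formula.ctx u (.atom b.1 b.2))))
        (bigAnd S h ((allAtoms S).map fun c =>
          (Formula.and (Formula.ctx u (.atom c.1 c.2))
            (.neg (Formula.ctx u' (.atom c.1 c.2)))).imp
              (Formula.prec c.1 c.2 b.1 b.2)))))

/-! Formula (1) transcribes the definition of `≤_P` with `Φ` the set of all atoms: its finite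
conjunctions and disjunctions range over all atoms, and `(X=x)^u` holds exactly when the solution
for `u` gives `X` the value `x`. What remains is to identify that solution with the given
`A_u`: in a recursive model two compliant assignments agreeing on the exogenous variables
agree everywhere, by well-founded induction along the causal order, which is a strict total
order on a finite set. -/

section Solutions

variable {S : Signature} {F : StructFns S}

theorem Recursive.eq_of_complies_s13 (hF : Recursive S F) {A A' : Assignment S}
    (hA : Complies S F A) (hA' : Complies S F A')
    (hexo : ∀ X : S.U, A (Sum.inl X) = A' (Sum.inl X)) : A = A' := by
  obtain ⟨lt, hlt, hdep⟩ := hF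
  have : IsTrans _ lt := ⟨hlt.trans⟩
  have : Std.Irrefl lt := ⟨hlt.irrefl⟩
  funext Y
  induction Y using (Finite.wellFounded_of_trans_of_irrefl lt).induction with
  | _ Y ih =>
    cases Y with
    | inl X => exact hexo X
    | inr X => rw [hA X, hA' X]; exact hdep X _ _ fun Z _ hZ => ih Z hZ

theorem solve_eq_of_complies (hF : Recursive S F) {u : ExoSetting S} {A : Assignment S}
    (hA : Complies S F A) (hu : ∀ X : S.U, A (Sum.inl X) = u X) : solve S F u = A := by
  have hex : ∃ B : Assignment S, Complies S F B ∧ ∀ X : S.U, B (Sum.inl X) = u X := ⟨A, hA, hu⟩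
  rw [solve, dif_pos hex]
  exact hF.eq_of_complies_s13 hex.choose_spec.1 hA fun X => (hex.choose_spec.2 X).trans (hu X).symm

end Solutions

section Semantics

variable {S : Signature} {F : StructFns S} {P : Priority S} {A : Assignment S}

@[simp]
theorem sat_imp {φ ψ : Formula S} :
    Sat S F P A (φ.imp ψ) ↔ (Sat S F P A φ → Sat S F P A ψ) := by
  simp only [Formula.imp, Sat, not_and, not_not]

@[simp]
theorem sat_or {φ ψ : Formula S} :
    Sat S F P A (φ.or ψ) ↔ Sat S F P A φ ∨ Sat S F P A ψ := by
  simp only [Formula.or, Sat, not_and_or, not_not]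

@[simp]
theorem not_sat_botF (h : Nonempty (S.U ⊕ S.V)) : ¬ Sat S F P A (botF S h) :=
  fun ⟨hpos, hneg⟩ => hneg hpos

@[simp]
theorem sat_topF (h : Nonempty (S.U ⊕ S.V)) : Sat S F P A (topF S h) :=
  not_sat_botF h

@[simp]
theorem sat_bigAnd (h : Nonempty (S.U ⊕ S.V)) (L : List (Formula S)) :
    Sat S F P A (bigAnd S h L) ↔ ∀ φ ∈ L, Sat S F P A φ := by
  induction L with
  | nil => simp [bigAnd]
  | cons φ L ih => simp [bigAnd, Sat, ← ih]

@[simp]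
theorem sat_bigOr (h : Nonempty (S.U ⊕ S.V)) (L : List (Formula S)) :
    Sat S F P A (bigOr S h L) ↔ ∃ φ ∈ L, Sat S F P A φ := by
  induction L with
  | nil => simp [bigOr]
  | cons φ L ih => simp [bigOr, ← ih]

theorem mem_allAtoms (a : SAtom S) : a ∈ allAtoms S := Finset.mem_toList.2 (Finset.mem_univ a)

theorem sat_bigAnd_allAtoms (h : Nonempty (S.U ⊕ S.V)) (f : SAtom S → Formula S) :
    Sat S F P A (bigAnd S h ((allAtoms S).map f)) ↔ ∀ a, Sat S F P A (f a) := by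
  simp only [sat_bigAnd, List.forall_mem_map, mem_allAtoms, true_implies]

theorem sat_bigOr_allAtoms (h : Nonempty (S.U ⊕ S.V)) (f : SAtom S → Formula S) :
    Sat S F P A (bigOr S h ((allAtoms S).map f)) ↔ ∃ a, Sat S F P A (f a) := by
  simp only [sat_bigOr, List.mem_map, mem_allAtoms, true_and, exists_exists_eq_and]

theorem sat_formula1_iff (h : Nonempty (S.U ⊕ S.V)) (u u' : ExoSetting S) :
    Sat S F P A (formula1 S h u u') ↔
      IdealLe S Set.univ P.lt (solve S F u) (solve S F u') := by
  simp only [formula1, IdealLe, sat_or, sat_bigAnd_allAtoms, sat_bigOr_allAtoms, sat_imp, Sat,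
    Set.mem_univ, true_implies, true_and, and_imp, and_assoc, ne_eq, Sigma.eta, and_left_comm]

end Semantics

/-- definability of the ideal ordering, formula (1): for every
causal deontic model whose priority ordering has as domain the set of all atoms,
and all exogenous settings `u, u'`, the model satisfies formula (1) iff
`A_u ≤_P A_{u'}`, where `A_u`, `A_{u'}` are the unique assignments complying with
`F` whose exogenous values are `u` resp. `u'`, and `≤_P` is the ideal ordering
induced by `P`. -/
theorem formula1_defines_ideal_ordering (S : Signature) (h : Nonempty (S.U ⊕ S.V))
    (M : CDModel S) (hdom : M.P.dom = Set.univ) (u u' : ExoSetting S)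
    (A₁ A₂ : Assignment S)
    (hA₁ : Complies S M.F A₁) (hu₁ : ∀ X : S.U, A₁ (Sum.inl X) = u X)
    (hA₂ : Complies S M.F A₂) (hu₂ : ∀ X : S.U, A₂ (Sum.inl X) = u' X) :
    M.Sat (formula1 S h u u') ↔ IdealLe S M.P.dom M.P.lt A₁ A₂ := by
  rw [CDModel.Sat, sat_formula1_iff, hdom, solve_eq_of_complies M.recF hA₁ hu₁,
    solve_eq_of_complies M.recF hA₂ hu₂]
end
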